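/- Let H be a Hermitian matrix in M_d(ℂ) and let V be a unitary matrix in U(d). Then trace(V ρ V† H) = trace(ρ H) holds for every density matrix ρ if and only if V H = H V. -/

import Mathlib

open Matrix
open ComplexOrder

/-!
By cyclicity of the trace, `Tr(V ρ V† H) = Tr(ρ V† H V)`, so the hypothesis says that `V† H V`
and `H` have the same expectation value in every state. Testing on the pure states
`x x† / ‖x‖²` shows that the two matrices have the same quadratic form `x ↦ x† A x`, and over `ℂ`
a matrix is determined by its quadratic form (polarization). Finally, for unitary `V`,
`V† H V = H` is the same as `V H = H V`.
-/

theorem Matrix.eq_of_forall_star_dotProduct_mulVec_eq {n : Type*} [Fintype n]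
    {A B : Matrix n n ℂ} (h : ∀ x : n → ℂ, star x ⬝ᵥ A *ᵥ x = star x ⬝ᵥ B *ᵥ x) : A = B := by
  classical
  refine toEuclideanLin.injective ((ext_inner_map _ _).mp fun x => ?_)
  rw [EuclideanSpace.inner_eq_star_dotProduct, EuclideanSpace.inner_eq_star_dotProduct]
  simp only [toLpLin_apply, dotProduct_star x.ofLp]
  rw [dotProduct_comm, h, dotProduct_comm]

theorem Matrix.trace_vecMulVec_mul {n R : Type*} [Fintype n] [CommSemiring R] (x y : n → R)
    (A : Matrix n n R) : (vecMulVec x y * A).trace = y ⬝ᵥ A *ᵥ x := by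
  rw [vecMulVec_mul, trace_vecMulVec, dotProduct_comm, dotProduct_mulVec]

theorem Matrix.eq_of_forall_density_trace_mul_eq {n : Type*} [Fintype n] {A B : Matrix n n ℂ}
    (h : ∀ ρ : Matrix n n ℂ, ρ.PosSemidef → ρ.trace = 1 → (ρ * A).trace = (ρ * B).trace) :
    A = B := by
  refine eq_of_forall_star_dotProduct_mulVec_eq fun x => ?_
  rw [← trace_vecMulVec_mul, ← trace_vecMulVec_mul]
  set P := vecMulVec x (star x)
  have hP : P.PosSemidef := posSemidef_vecMulVec_self_star x
  by_cases hP0 : P.trace = 0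
  · simp [hP.trace_eq_zero_iff.mp hP0]
  · have hρ := h (P.trace⁻¹ • P) (hP.smul (inv_nonneg_of_nonneg hP.trace_nonneg))
      (by rw [trace_smul, smul_eq_mul, inv_mul_cancel₀ hP0])
    simp only [smul_mul, trace_smul, smul_eq_mul] at hρ
    exact mul_left_cancel₀ (inv_ne_zero hP0) hρ

theorem energy_invariant_iff_commutes (d : ℕ) (H : Matrix (Fin d) (Fin d) ℂ)
    (V : Matrix.unitaryGroup (Fin d) ℂ) :
    (∀ ρ : Matrix (Fin d) (Fin d) ℂ, ρ.PosSemidef → ρ.trace = 1 →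
        ((V : Matrix (Fin d) (Fin d) ℂ) * ρ * star (V : Matrix (Fin d) (Fin d) ℂ) * H).trace
          = (ρ * H).trace)
      ↔ (V : Matrix (Fin d) (Fin d) ℂ) * H = H * (V : Matrix (Fin d) (Fin d) ℂ) := by
  have trace_conj (ρ : Matrix (Fin d) (Fin d) ℂ) :
      ((V : Matrix (Fin d) (Fin d) ℂ) * ρ * star (V : Matrix (Fin d) (Fin d) ℂ) * H).trace
        = (ρ * (star (V : Matrix (Fin d) (Fin d) ℂ) * H * V)).trace := by
    simp only [Matrix.mul_assoc]
    rw [trace_mul_comm]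
    simp only [Matrix.mul_assoc]
  simp only [trace_conj]
  rw [← commute_iff_eq, commute_unitary_iff_star_left_conjugate V.2]
  exact ⟨eq_of_forall_density_trace_mul_eq, fun h _ _ _ => by rw [h]⟩
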